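/- Let Q_s ∈ ℝ^{m×k} have orthonormal columns, R_s ∈ ℝ^{k×n} with R_s R_s† = I_k (full row rank), and A_i, P_s given with Q_i, R_i defined by Q_i = (I_m − Q_s Q_sᵀ) A_i P_s R_s† + Q_s P for a skew-symmetric P ∈ ℝ^{k×k} and R_i = Q_sᵀ A_i P_s − P R_s. If (I_m − Q_s Q_sᵀ) A_i P_s (I_n − R_s† R_s) = 0, then A_i P_s = Q_s R_i + Q_i R_s and Q_sᵀ Q_i + Q_iᵀ Q_s = 0. -/
import Mathlib


open Matrix

/-- `Ad` is the Moore–Penrose pseudoinverse of `A`. -/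
def IsMoorePenrose {k n : ℕ} (A : Matrix (Fin k) (Fin n) ℝ)
    (Ad : Matrix (Fin n) (Fin k) ℝ) : Prop :=
  A * Ad * A = A ∧ Ad * A * Ad = Ad ∧ (A * Ad)ᵀ = A * Ad ∧ (Ad * A)ᵀ = Ad * A

theorem stmt13 (m k n : ℕ)
    (Qs : Matrix (Fin m) (Fin k) ℝ) (hQ : Qsᵀ * Qs = 1)
    (Rs : Matrix (Fin k) (Fin n) ℝ) (Rd : Matrix (Fin n) (Fin k) ℝ)
    (hRd : IsMoorePenrose Rs Rd) (hRfull : Rs * Rd = 1)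
    (Ai : Matrix (Fin m) (Fin n) ℝ)
    (Ps : Matrix (Fin n) (Fin n) ℝ)
    (hPs : ∃ σ : Equiv.Perm (Fin n), Ps = σ.permMatrix ℝ)
    (P : Matrix (Fin k) (Fin k) ℝ) (hP : Pᵀ = -P)
    (hcons : (1 - Qs * Qsᵀ) * (Ai * Ps) * (1 - Rd * Rs) = 0) :
    Ai * Ps = Qs * (Qsᵀ * (Ai * Ps) - P * Rs) +
        ((1 - Qs * Qsᵀ) * (Ai * Ps) * Rd + Qs * P) * Rs ∧
      Qsᵀ * ((1 - Qs * Qsᵀ) * (Ai * Ps) * Rd + Qs * P) +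
        ((1 - Qs * Qsᵀ) * (Ai * Ps) * Rd + Qs * P)ᵀ * Qs = 0 := by
  set M := Ai * Ps with hM
  have h1 : (1 - Qs * Qsᵀ) * M * Rd * Rs = (1 - Qs * Qsᵀ) * M := by
    have h := hcons
    rw [Matrix.mul_sub, Matrix.mul_one, sub_eq_zero] at h
    rw [Matrix.mul_assoc ((1 - Qs * Qsᵀ) * M) Rd Rs, ← h]
  constructor
  · rw [Matrix.add_mul, h1, Matrix.mul_sub, Matrix.sub_mul, Matrix.one_mul,
      ← Matrix.mul_assoc Qs Qsᵀ M, ← Matrix.mul_assoc Qs P Rs]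
    abel
  · have hQ' : Qsᵀ * (1 - Qs * Qsᵀ) = 0 := by
      rw [Matrix.mul_sub, Matrix.mul_one, ← Matrix.mul_assoc, hQ, Matrix.one_mul, sub_self]
    have hQ'' : (1 - Qs * Qsᵀ)ᵀ * Qs = 0 := by
      rw [transpose_sub, transpose_one, transpose_mul, transpose_transpose,
        Matrix.sub_mul, Matrix.one_mul, Matrix.mul_assoc, hQ, Matrix.mul_one, sub_self]
    rw [Matrix.mul_add, ← Matrix.mul_assoc Qsᵀ ((1 - Qs * Qsᵀ) * M) Rd,
      ← Matrix.mul_assoc Qsᵀ (1 - Qs * Qsᵀ) M, hQ', Matrix.zero_mul, Matrix.zero_mul,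
      ← Matrix.mul_assoc Qsᵀ Qs P, hQ, Matrix.one_mul,
      transpose_add, Matrix.add_mul]
    simp only [transpose_mul, Matrix.mul_assoc, hQ'', hQ, Matrix.mul_zero,
      Matrix.mul_one, hP]
    abel
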